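/- Let Q be a submodule of a C-bimodule M over 𝔽₂, P = M/Q the quotient bimodule, π : M → P the naive projection, and σ : P → M any naive degree-0 pre-morphism whose (0|0)-components split π linearly (π^{0|0} ∘ σ^{0|0} = id). Define φ := (id − σπ) ∘ n_M ∘ σ, where n_M denotes the degree-1 pre-morphism M → M whose components are the structure maps n_M^{r|s}. Then φ : P[−1] → Q is a bimodule morphism, and M is quasi-isomorphic to cone(φ). -/

import Mathlib

/-! # A common framework for A∞ categories and bimodules over 𝔽₂ -/

abbrev F2 : Type := ZMod 2

/-- Data of a graded 𝔽₂-vector space: a module together with a family of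
submodules indexed by ℤ (the grading). -/
structure GradedF2 : Type 1 where
  carrier : Type
  [acg : AddCommGroup carrier]
  [mod : Module F2 carrier]
  grading : ℤ → Submodule F2 carrier

attribute [instance] GradedF2.acg GradedF2.mod

namespace GradedF2

/-- The family of submodules is an internal direct sum decomposition,
i.e. the space is genuinely graded. -/
def IsGraded (V : GradedF2) : Prop := DirectSum.IsInternal V.grading

/-- The shift `V[n]`: gradings are shifted down by `n`; over 𝔽₂ nothing else
changes. -/
def shift (V : GradedF2) (n : ℤ) : GradedF2 where
  carrier := V.carrier
  grading := fun d => V.grading (d + n)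

/-- The graded linear dual: the functional dual to a degree `d` (basis) element
has degree `-d`. -/
noncomputable def dual (V : GradedF2) : GradedF2 where
  carrier := Module.Dual F2 V.carrier
  grading := fun d =>
    { carrier := { f : Module.Dual F2 V.carrier | ∀ e : ℤ, e ≠ -d → ∀ v ∈ V.grading e, f v = 0 }
      add_mem' := by
        intro f g hf hg e he v hv
        simp only [Set.mem_setOf_eq] at hf hg ⊢
        rw [LinearMap.add_apply, hf e he v hv, hg e he v hv, add_zero]
      zero_mem' := by
        intro e he v hv
        simp
      smul_mem' := by
        intro c f hf e he v hv
        simp only [Set.mem_setOf_eq] at hf ⊢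
        rw [LinearMap.smul_apply, hf e he v hv, smul_zero] }

/-- Direct sum of two graded spaces. -/
def prodG (V W : GradedF2) : GradedF2 where
  carrier := V.carrier × W.carrier
  grading := fun d => (V.grading d).prod (W.grading d)

end GradedF2

/-- Cast along an equality of graded vector spaces. -/
def scast {V W : GradedF2} (h : V = W) : V.carrier → W.carrier :=
  fun v => cast (congrArg GradedF2.carrier h) v

/-! ## A∞ categories -/

/-- Data of an A∞ category over 𝔽₂.  The `k`-th structure map has arity
`k+1`; chains of objects are recorded as functions `ℕ → Obj` (only the
initial values are relevant), and the `i`-th input of `m k X` is a morphism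
from `X i` to `X (i+1)`. -/
structure AInfCatData : Type 1 where
  Obj : Type
  Hom : Obj → Obj → GradedF2
  m : ∀ (k : ℕ) (X : ℕ → Obj),
      (∀ i : Fin (k+1), (Hom (X i.1) (X (i.1 + 1))).carrier) →
      (Hom (X 0) (X (k+1))).carrier

/-- The contracted object chain: the block of `j+1` consecutive arrows
starting at position `a` is collapsed to a single arrow. -/
def ctr {Obj : Type} (X : ℕ → Obj) (a j : ℕ) : ℕ → Obj :=
  fun t => if t ≤ a then X t else X (t + j)

/-- Contract a tuple of composable inputs by applying an inner structure map
of arity `j+1`, starting at position `a`. -/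
def ctrIns (C : AInfCatData) (n : ℕ) (X : ℕ → C.Obj)
    (x : ∀ i : Fin n, (C.Hom (X i.1) (X (i.1 + 1))).carrier)
    (a j : ℕ) (h : a + (j+1) ≤ n) :
    ∀ t : Fin (n - (j+1) + 1), (C.Hom (ctr X a j t.1) (ctr X a j (t.1 + 1))).carrier :=
  fun t =>
    if h1 : t.1 < a then
      scast (show C.Hom (X t.1) (X (t.1 + 1)) = C.Hom (ctr X a j t.1) (ctr X a j (t.1 + 1)) by
        rw [show ctr X a j t.1 = X t.1 from if_pos (by omega),
            show ctr X a j (t.1 + 1) = X (t.1 + 1) from if_pos (by omega)])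
        (x ⟨t.1, by have := t.2; omega⟩)
    else if h2 : t.1 = a then
      scast (show C.Hom (X (a + 0)) (X (a + (j+1))) = C.Hom (ctr X a j t.1) (ctr X a j (t.1 + 1)) by
        rw [show ctr X a j t.1 = X (a + 0) from (if_pos (by omega)).trans (congrArg X (by omega)),
            show ctr X a j (t.1 + 1) = X (a + (j+1)) from
              (if_neg (by omega)).trans (congrArg X (by omega))])
        (C.m j (fun u => X (a + u)) (fun u => x ⟨a + u.1, by have := u.2; omega⟩))
    else
      scast (show C.Hom (X (t.1 + j)) (X (t.1 + j + 1)) = C.Hom (ctr X a j t.1) (ctr X a j (t.1 + 1)) by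
        rw [show ctr X a j t.1 = X (t.1 + j) from if_neg (by omega),
            show ctr X a j (t.1 + 1) = X (t.1 + j + 1) from
              (if_neg (by omega)).trans (congrArg X (by omega))])
        (x ⟨t.1 + j, by have := t.2; omega⟩)

/-- The term `m^{outer}(id^{⊗ a} ⊗ m^{j+1} ⊗ id^{⊗ ...})` of the A∞ relations,
evaluated on a tuple of `K+1` composable inputs. -/
def catComp (C : AInfCatData) (K : ℕ) (X : ℕ → C.Obj)
    (x : ∀ i : Fin (K+1), (C.Hom (X i.1) (X (i.1 + 1))).carrier)
    (a j : ℕ) (h : a + j ≤ K) : (C.Hom (X 0) (X (K+1))).carrier :=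
  scast (show C.Hom (ctr X a j 0) (ctr X a j (K - j + 1)) = C.Hom (X 0) (X (K+1)) by
      rw [show ctr X a j 0 = X 0 from if_pos (Nat.zero_le a),
          show ctr X a j (K - j + 1) = X (K+1) from
            (if_neg (by omega)).trans (congrArg X (by omega))])
    (C.m (K - j) (ctr X a j)
      (fun t => ctrIns C (K+1) X x a j (by omega) (Fin.cast (by omega) t)))

/-- The axioms making `C` an honest A∞ category over 𝔽₂: each structure map is
multilinear (over 𝔽₂, additivity in each slot), has degree `2 - k` (where `k`
is the arity), the Hom spaces are genuinely graded, and the A∞ relations hold. -/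
structure IsAInfCat (C : AInfCatData) : Prop where
  graded : ∀ X Y : C.Obj, (C.Hom X Y).IsGraded
  add : ∀ (k : ℕ) (X : ℕ → C.Obj)
      (x : ∀ i : Fin (k+1), (C.Hom (X i.1) (X (i.1 + 1))).carrier)
      (i : Fin (k+1)) (u v : (C.Hom (X i.1) (X (i.1 + 1))).carrier),
      C.m k X (Function.update x i (u + v)) =
        C.m k X (Function.update x i u) + C.m k X (Function.update x i v)
  deg : ∀ (k : ℕ) (X : ℕ → C.Obj) (d : Fin (k+1) → ℤ)
      (x : ∀ i : Fin (k+1), (C.Hom (X i.1) (X (i.1 + 1))).carrier),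
      (∀ i, x i ∈ (C.Hom (X i.1) (X (i.1 + 1))).grading (d i)) →
      C.m k X x ∈ (C.Hom (X 0) (X (k+1))).grading ((∑ i, d i) + (2 - ((k : ℤ) + 1)))
  rel : ∀ (K : ℕ) (X : ℕ → C.Obj)
      (x : ∀ i : Fin (K+1), (C.Hom (X i.1) (X (i.1 + 1))).carrier),
      (∑ a ∈ Finset.range (K+1), ∑ j ∈ Finset.range (K+1),
        if h : a + j ≤ K then catComp C K X x a j h else 0) = 0

/-- Strict units for an A∞ category. -/
structure IsStrictUnits (C : AInfCatData) (e : ∀ X : C.Obj, (C.Hom X X).carrier) : Prop where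
  deg : ∀ X, e X ∈ (C.Hom X X).grading 0
  m_one : ∀ X : C.Obj, C.m 0 (fun _ => X) (fun _ => e X) = 0
  unit_left : ∀ (X : ℕ → C.Obj)
      (x : ∀ i : Fin 2, (C.Hom (X i.1) (X (i.1 + 1))).carrier)
      (h : X 2 = X 1),
      x 1 = scast (show C.Hom (X 1) (X 1) = C.Hom (X 1) (X 2) by rw [h]) (e (X 1)) →
      C.m 1 X x = scast (show C.Hom (X 0) (X 1) = C.Hom (X 0) (X 2) by rw [h]) (x 0)
  unit_right : ∀ (X : ℕ → C.Obj)
      (x : ∀ i : Fin 2, (C.Hom (X i.1) (X (i.1 + 1))).carrier)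
      (h : X 1 = X 0),
      x 0 = scast (show C.Hom (X 0) (X 0) = C.Hom (X 0) (X 1) by rw [h]) (e (X 0)) →
      C.m 1 X x = scast (show C.Hom (X 1) (X 2) = C.Hom (X 0) (X 2) by rw [h]) (x 1)
  higher : ∀ (k : ℕ), 2 ≤ k → ∀ (X : ℕ → C.Obj)
      (x : ∀ i : Fin (k+1), (C.Hom (X i.1) (X (i.1 + 1))).carrier)
      (t : Fin (k+1)) (h : X (t.1 + 1) = X t.1),
      x t = scast (show C.Hom (X t.1) (X t.1) = C.Hom (X t.1) (X (t.1 + 1)) by rw [h]) (e (X t.1)) →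
      C.m k X x = 0

/-! ## A∞ bimodules over a pair of A∞ categories -/

/-- Data of a `C`-`D` bimodule.  The structure map `n r s X Y` takes `r`
composable `C`-inputs along the chain `X`, a module element, and `s`
composable `D`-inputs along the chain `Y`; the module element sits at
`(X 0, Y s)` and the output at `(X r, Y 0)`. -/
structure BimodData (C D : AInfCatData) : Type 1 where
  space : C.Obj → D.Obj → GradedF2
  n : ∀ (r s : ℕ) (X : ℕ → C.Obj) (Y : ℕ → D.Obj),
      (∀ i : Fin r, (C.Hom (X i.1) (X (i.1 + 1))).carrier) →
      (space (X 0) (Y s)).carrier →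
      (∀ i : Fin s, (D.Hom (Y i.1) (Y (i.1 + 1))).carrier) →
      (space (X r) (Y 0)).carrier

/-- Data of a pre-morphism of `C`-`D` bimodules: a collection of component
maps of the same shape as the structure maps. -/
structure PreMorData {C D : AInfCatData} (M N : BimodData C D) : Type where
  f : ∀ (r s : ℕ) (X : ℕ → C.Obj) (Y : ℕ → D.Obj),
      (∀ i : Fin r, (C.Hom (X i.1) (X (i.1 + 1))).carrier) →
      (M.space (X 0) (Y s)).carrier →
      (∀ i : Fin s, (D.Hom (Y i.1) (Y (i.1 + 1))).carrier) →
      (N.space (X r) (Y 0)).carrier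

variable {C D : AInfCatData}

/-- The structure maps of a bimodule, seen as a (degree 1) pre-morphism. -/
def toPre (M : BimodData C D) : PreMorData M M := ⟨M.n⟩

def zeroPre (M N : BimodData C D) : PreMorData M N := ⟨fun _ _ _ _ _ _ _ => 0⟩

def addPre {M N : BimodData C D} (f g : PreMorData M N) : PreMorData M N :=
  ⟨fun r s X Y c z d => f.f r s X Y c z d + g.f r s X Y c z d⟩

/-- Composition of pre-morphisms:
`(g f)^{r|s} = ∑ g^{r-i|s-j}(id ⊗ f^{i|j} ⊗ id)`, where `f` consumes the
inputs adjacent to the module slot. -/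
def compPre {M N P : BimodData C D} (g : PreMorData N P) (f : PreMorData M N) :
    PreMorData M P :=
  ⟨fun r s X Y c z d =>
    ∑ i ∈ Finset.range (r+1), ∑ j ∈ Finset.range (s+1),
      if h : i ≤ r ∧ j ≤ s then
        scast (show P.space (X (i + (r - i))) (Y 0) = P.space (X r) (Y 0) by
            rw [show X (i + (r - i)) = X r from congrArg X (by omega)])
          (g.f (r - i) (s - j) (fun t => X (i + t)) Y
            (fun t => c ⟨i + t.1, by have := t.2; omega⟩)
            (f.f i j X (fun t => Y ((s - j) + t))
              (fun t => c ⟨t.1, by have := t.2; omega⟩)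
              (scast (show M.space (X 0) (Y s) = M.space (X 0) (Y (s - j + j)) by
                  rw [show Y s = Y (s - j + j) from congrArg Y (by omega)]) z)
              (fun t => d ⟨(s - j) + t.1, by have := t.2; omega⟩))
            (fun t => d ⟨t.1, by have := t.2; omega⟩))
      else 0⟩

/-- Insertion of an inner category structure map (arity `j+1`, starting at
position `a`) into the `C`-inputs of a pre-morphism component. -/
def insC {M N : BimodData C D} (f : PreMorData M N) (r s : ℕ)
    (X : ℕ → C.Obj) (Y : ℕ → D.Obj)
    (c : ∀ i : Fin r, (C.Hom (X i.1) (X (i.1 + 1))).carrier)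
    (z : (M.space (X 0) (Y s)).carrier)
    (d : ∀ i : Fin s, (D.Hom (Y i.1) (Y (i.1 + 1))).carrier)
    (a j : ℕ) (h : a + (j+1) ≤ r) : (N.space (X r) (Y 0)).carrier :=
  scast (show N.space (ctr X a j (r - (j+1) + 1)) (Y 0) = N.space (X r) (Y 0) by
      rw [show ctr X a j (r - (j+1) + 1) = X r from
        (if_neg (by omega)).trans (congrArg X (by omega))])
    (f.f (r - (j+1) + 1) s (ctr X a j) Y
      (ctrIns C r X c a j h)
      (scast (show M.space (X 0) (Y s) = M.space (ctr X a j 0) (Y s) by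
          rw [show ctr X a j 0 = X 0 from if_pos (Nat.zero_le a)]) z)
      d)

/-- Insertion of an inner category structure map into the `D`-inputs. -/
def insD {M N : BimodData C D} (f : PreMorData M N) (r s : ℕ)
    (X : ℕ → C.Obj) (Y : ℕ → D.Obj)
    (c : ∀ i : Fin r, (C.Hom (X i.1) (X (i.1 + 1))).carrier)
    (z : (M.space (X 0) (Y s)).carrier)
    (d : ∀ i : Fin s, (D.Hom (Y i.1) (Y (i.1 + 1))).carrier)
    (a j : ℕ) (h : a + (j+1) ≤ s) : (N.space (X r) (Y 0)).carrier :=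
  scast (show N.space (X r) (ctr Y a j 0) = N.space (X r) (Y 0) by
      rw [show ctr Y a j 0 = Y 0 from if_pos (Nat.zero_le a)])
    (f.f r (s - (j+1) + 1) X (ctr Y a j)
      c
      (scast (show M.space (X 0) (Y s) = M.space (X 0) (ctr Y a j (s - (j+1) + 1)) by
          rw [show ctr Y a j (s - (j+1) + 1) = Y s from
            (if_neg (by omega)).trans (congrArg Y (by omega))]) z)
      (ctrIns D s Y d a j h))

/-- The differential of a pre-morphism. -/
def deltaPre {M N : BimodData C D} (f : PreMorData M N) : PreMorData M N :=
  ⟨fun r s X Y c z d =>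
    (compPre (toPre N) f).f r s X Y c z d +
    (compPre f (toPre M)).f r s X Y c z d +
    (∑ a ∈ Finset.range (r+1), ∑ j ∈ Finset.range (r+1),
      if h : a + (j+1) ≤ r then insC f r s X Y c z d a j h else 0) +
    (∑ a ∈ Finset.range (s+1), ∑ j ∈ Finset.range (s+1),
      if h : a + (j+1) ≤ s then insD f r s X Y c z d a j h else 0)⟩

/-- The axioms making `M` an honest A∞ `C`-`D` bimodule over 𝔽₂. -/
structure IsBimod {C D : AInfCatData} (M : BimodData C D) : Prop where
  add_c : ∀ (r s : ℕ) (X : ℕ → C.Obj) (Y : ℕ → D.Obj)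
      (c : ∀ i : Fin r, (C.Hom (X i.1) (X (i.1 + 1))).carrier)
      (i : Fin r) (u v : (C.Hom (X i.1) (X (i.1 + 1))).carrier)
      (z : (M.space (X 0) (Y s)).carrier)
      (d : ∀ i : Fin s, (D.Hom (Y i.1) (Y (i.1 + 1))).carrier),
      M.n r s X Y (Function.update c i (u + v)) z d =
        M.n r s X Y (Function.update c i u) z d + M.n r s X Y (Function.update c i v) z d
  add_z : ∀ (r s : ℕ) (X : ℕ → C.Obj) (Y : ℕ → D.Obj) c (z z' : (M.space (X 0) (Y s)).carrier) d,
      M.n r s X Y c (z + z') d = M.n r s X Y c z d + M.n r s X Y c z' d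
  add_d : ∀ (r s : ℕ) (X : ℕ → C.Obj) (Y : ℕ → D.Obj)
      (c : ∀ i : Fin r, (C.Hom (X i.1) (X (i.1 + 1))).carrier)
      (z : (M.space (X 0) (Y s)).carrier)
      (d : ∀ i : Fin s, (D.Hom (Y i.1) (Y (i.1 + 1))).carrier)
      (i : Fin s) (u v : (D.Hom (Y i.1) (Y (i.1 + 1))).carrier),
      M.n r s X Y c z (Function.update d i (u + v)) =
        M.n r s X Y c z (Function.update d i u) + M.n r s X Y c z (Function.update d i v)
  deg : ∀ (r s : ℕ) (X : ℕ → C.Obj) (Y : ℕ → D.Obj)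
      (dc : Fin r → ℤ) (dz : ℤ) (dd : Fin s → ℤ)
      (c : ∀ i : Fin r, (C.Hom (X i.1) (X (i.1 + 1))).carrier)
      (z : (M.space (X 0) (Y s)).carrier)
      (d : ∀ i : Fin s, (D.Hom (Y i.1) (Y (i.1 + 1))).carrier),
      (∀ i, c i ∈ (C.Hom (X i.1) (X (i.1 + 1))).grading (dc i)) →
      z ∈ (M.space (X 0) (Y s)).grading dz →
      (∀ i, d i ∈ (D.Hom (Y i.1) (Y (i.1 + 1))).grading (dd i)) →
      M.n r s X Y c z d ∈
        (M.space (X r) (Y 0)).grading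
          ((∑ i, dc i) + dz + (∑ i, dd i) + (1 - (r : ℤ) - (s : ℤ)))
  rel : ∀ (r s : ℕ) (X : ℕ → C.Obj) (Y : ℕ → D.Obj)
      (c : ∀ i : Fin r, (C.Hom (X i.1) (X (i.1 + 1))).carrier)
      (z : (M.space (X 0) (Y s)).carrier)
      (d : ∀ i : Fin s, (D.Hom (Y i.1) (Y (i.1 + 1))).carrier),
      ((compPre (toPre M) (toPre M)).f r s X Y c z d +
        (∑ a ∈ Finset.range (r+1), ∑ j ∈ Finset.range (r+1),
          if h : a + (j+1) ≤ r then insC (toPre M) r s X Y c z d a j h else 0) +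
        (∑ a ∈ Finset.range (s+1), ∑ j ∈ Finset.range (s+1),
          if h : a + (j+1) ≤ s then insD (toPre M) r s X Y c z d a j h else 0)) = 0

/-- The axioms for a pre-morphism of degree `dg`: components are multilinear
and have degree `dg - r - s`. -/
structure IsPreMor {M N : BimodData C D} (f : PreMorData M N) (dg : ℤ) : Prop where
  add_c : ∀ (r s : ℕ) (X : ℕ → C.Obj) (Y : ℕ → D.Obj)
      (c : ∀ i : Fin r, (C.Hom (X i.1) (X (i.1 + 1))).carrier)
      (i : Fin r) (u v : (C.Hom (X i.1) (X (i.1 + 1))).carrier)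
      (z : (M.space (X 0) (Y s)).carrier)
      (d : ∀ i : Fin s, (D.Hom (Y i.1) (Y (i.1 + 1))).carrier),
      f.f r s X Y (Function.update c i (u + v)) z d =
        f.f r s X Y (Function.update c i u) z d + f.f r s X Y (Function.update c i v) z d
  add_z : ∀ (r s : ℕ) (X : ℕ → C.Obj) (Y : ℕ → D.Obj) c (z z' : (M.space (X 0) (Y s)).carrier) d,
      f.f r s X Y c (z + z') d = f.f r s X Y c z d + f.f r s X Y c z' d
  add_d : ∀ (r s : ℕ) (X : ℕ → C.Obj) (Y : ℕ → D.Obj)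
      (c : ∀ i : Fin r, (C.Hom (X i.1) (X (i.1 + 1))).carrier)
      (z : (M.space (X 0) (Y s)).carrier)
      (d : ∀ i : Fin s, (D.Hom (Y i.1) (Y (i.1 + 1))).carrier)
      (i : Fin s) (u v : (D.Hom (Y i.1) (Y (i.1 + 1))).carrier),
      f.f r s X Y c z (Function.update d i (u + v)) =
        f.f r s X Y c z (Function.update d i u) + f.f r s X Y c z (Function.update d i v)
  deg : ∀ (r s : ℕ) (X : ℕ → C.Obj) (Y : ℕ → D.Obj)
      (dc : Fin r → ℤ) (dz : ℤ) (dd : Fin s → ℤ)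
      (c : ∀ i : Fin r, (C.Hom (X i.1) (X (i.1 + 1))).carrier)
      (z : (M.space (X 0) (Y s)).carrier)
      (d : ∀ i : Fin s, (D.Hom (Y i.1) (Y (i.1 + 1))).carrier),
      (∀ i, c i ∈ (C.Hom (X i.1) (X (i.1 + 1))).grading (dc i)) →
      z ∈ (M.space (X 0) (Y s)).grading dz →
      (∀ i, d i ∈ (D.Hom (Y i.1) (Y (i.1 + 1))).grading (dd i)) →
      f.f r s X Y c z d ∈
        (N.space (X r) (Y 0)).grading
          ((∑ i, dc i) + dz + (∑ i, dd i) + (dg - (r : ℤ) - (s : ℤ)))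

/-- A bimodule morphism of degree `dg` is a pre-morphism which is closed for
the differential. -/
def IsMorphism {M N : BimodData C D} (f : PreMorData M N) (dg : ℤ) : Prop :=
  IsPreMor f dg ∧ deltaPre f = zeroPre M N

/-- Two pre-morphisms (of degree `dg`) are A∞ homotopic. -/
def Homotopic {M N : BimodData C D} (dg : ℤ) (f g : PreMorData M N) : Prop :=
  ∃ H : PreMorData M N, IsPreMor H (dg - 1) ∧ addPre f g = deltaPre H

/-- The `(0|0)` differential on the chain complex `M(X,Y)`. -/
def bdiff (M : BimodData C D) (X : C.Obj) (Y : D.Obj) :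
    (M.space X Y).carrier → (M.space X Y).carrier :=
  fun z => M.n 0 0 (fun _ => X) (fun _ => Y) (fun i => i.elim0) z (fun i => i.elim0)

/-- The `(0|0)` component of a pre-morphism, as a map `M(X,Y) → N(X,Y)`. -/
def comp00 {M N : BimodData C D} (f : PreMorData M N) (X : C.Obj) (Y : D.Obj) :
    (M.space X Y).carrier → (N.space X Y).carrier :=
  fun z => f.f 0 0 (fun _ => X) (fun _ => Y) (fun i => i.elim0) z (fun i => i.elim0)

/-- `f` is a quasi-isomorphism: every `(0|0)` component induces an isomorphism
on cohomology (stated elementarily: injectivity and surjectivity of the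
induced map on cohomology classes). -/
def QIso {M N : BimodData C D} (f : PreMorData M N) : Prop :=
  ∀ (X : C.Obj) (Y : D.Obj),
    (∀ z, bdiff M X Y z = 0 → (∃ u, comp00 f X Y z = bdiff N X Y u) →
      ∃ w, z = bdiff M X Y w) ∧
    (∀ z', bdiff N X Y z' = 0 →
      ∃ z, bdiff M X Y z = 0 ∧ ∃ u, comp00 f X Y z + z' = bdiff N X Y u)

/-- A naive pre-morphism: only the `(0|0)` components are (possibly) nonzero. -/
def naivePre (M N : BimodData C D)
    (g : ∀ (X : C.Obj) (Y : D.Obj), (M.space X Y).carrier → (N.space X Y).carrier) :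
    PreMorData M N :=
  ⟨fun r s X Y _ z _ =>
    if h : r = 0 ∧ s = 0 then
      scast (show N.space (X 0) (Y 0) = N.space (X r) (Y 0) by rw [h.1])
        (g (X 0) (Y 0)
          (scast (show M.space (X 0) (Y s) = M.space (X 0) (Y 0) by rw [h.2]) z))
    else 0⟩

/-- The naive identity morphism. -/
def idPre (M : BimodData C D) : PreMorData M M := naivePre M M (fun _ _ z => z)

/-! ## Standard constructions of bimodules -/

/-- The shifted bimodule `M[k]`. -/
def shiftBimod (M : BimodData C D) (k : ℤ) : BimodData C D where
  space := fun X Y => (M.space X Y).shift k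
  n := M.n

/-- The mapping cone of a (degree 0) pre-morphism `f : M → N`:
`cone(f)(X,Y) = M(X,Y)[1] ⊕ N(X,Y)`. -/
def coneBimod {M N : BimodData C D} (f : PreMorData M N) : BimodData C D where
  space := fun X Y => ((M.space X Y).shift 1).prodG (N.space X Y)
  n := fun r s X Y c z d =>
    (M.n r s X Y c z.1 d, N.n r s X Y c z.2 d + f.f r s X Y c z.1 d)

/-- The canonical (naive) inclusion `N → cone(f)`. -/
def coneInc {M N : BimodData C D} (f : PreMorData M N) : PreMorData N (coneBimod f) :=
  naivePre _ _ (fun _ _ z => (0, z))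

/-- The canonical (naive) projection `cone(f) → M[1]`. -/
def conePrj {M N : BimodData C D} (f : PreMorData M N) :
    PreMorData (coneBimod f) (shiftBimod M 1) :=
  naivePre _ _ (fun _ _ z => z.1)

/-- The naive projection `cone(f) → N` onto the second component (not in
general a morphism). -/
def coneSnd {M N : BimodData C D} (f : PreMorData M N) : PreMorData (coneBimod f) N :=
  naivePre _ _ (fun _ _ z => z.2)

/-- Turn a plain function into a linear functional when it is one
(and `0` otherwise); used to define dual bimodules at the level of data. -/
noncomputable def toLin {V : Type} [AddCommGroup V] [Module F2 V] (g : V → F2) :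
    Module.Dual F2 V := by
  classical exact if h : ∃ l : Module.Dual F2 V, ⇑l = g then h.choose else 0

/-- The linear dual of a `C`-`D` bimodule, a `D`-`C` bimodule. -/
noncomputable def dualBimod (M : BimodData C D) : BimodData D C where
  space := fun P Q => (M.space Q P).dual
  n := fun r s X Y c z d =>
    let zl : Module.Dual F2 (M.space (Y s) (X 0)).carrier := z
    toLin (fun w => zl (M.n s r Y X d w c))

/-- The adjoint of a pre-morphism `f : M → N`, a pre-morphism `N^∨ → M^∨`. -/
noncomputable def adjPre {M N : BimodData C D} (f : PreMorData M N) :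
    PreMorData (dualBimod N) (dualBimod M) :=
  ⟨fun r s X Y c z d =>
    let zl : Module.Dual F2 (N.space (Y s) (X 0)).carrier := z
    toLin (fun w => zl (f.f s r Y X d w c))⟩

/-- The mapping cocone `cocone(f) = cone(f^∨)[-1]`. -/
noncomputable def coconeBimod {M N : BimodData C D} (f : PreMorData M N) : BimodData D C :=
  shiftBimod (coneBimod (adjPre f)) (-1)

/-- The mapping cylinder `cyl(f) = cone(π_M)[-1]`. -/
def cylBimod {M N : BimodData C D} (f : PreMorData M N) : BimodData C D :=
  shiftBimod (coneBimod (conePrj f)) (-1)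

/-- The mapping cocylinder `cocyl(f) = cocone(π_M)[1]`. -/
noncomputable def cocylBimod {M N : BimodData C D} (f : PreMorData M N) : BimodData D C :=
  shiftBimod (coconeBimod (conePrj f)) 1

/-! ## The diagonal bimodule -/

/-- The object chain obtained by concatenating the `D`-side chain `Y`
(of length `s`) with the `C`-side chain `X`. -/
def diagChain {A : AInfCatData} (X Y : ℕ → A.Obj) (s : ℕ) : ℕ → A.Obj :=
  fun t => if t ≤ s then Y t else X (t - (s+1))

/-- The total tuple of composable inputs for the diagonal bimodule. -/
def diagTuple (A : AInfCatData) (r s : ℕ) (X Y : ℕ → A.Obj)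
    (c : ∀ i : Fin r, (A.Hom (X i.1) (X (i.1 + 1))).carrier)
    (z : (A.Hom (Y s) (X 0)).carrier)
    (d : ∀ i : Fin s, (A.Hom (Y i.1) (Y (i.1 + 1))).carrier) :
    ∀ t : Fin (r + s + 1),
      (A.Hom (diagChain X Y s t.1) (diagChain X Y s (t.1 + 1))).carrier :=
  fun t =>
    if h1 : t.1 < s then
      scast (show A.Hom (Y t.1) (Y (t.1 + 1)) =
          A.Hom (diagChain X Y s t.1) (diagChain X Y s (t.1 + 1)) by
        rw [show diagChain X Y s t.1 = Y t.1 from if_pos (by omega),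
            show diagChain X Y s (t.1 + 1) = Y (t.1 + 1) from if_pos (by omega)])
        (d ⟨t.1, by omega⟩)
    else if h2 : t.1 = s then
      scast (show A.Hom (Y s) (X 0) =
          A.Hom (diagChain X Y s t.1) (diagChain X Y s (t.1 + 1)) by
        rw [show diagChain X Y s t.1 = Y s from (if_pos (by omega)).trans (congrArg Y (by omega)),
            show diagChain X Y s (t.1 + 1) = X 0 from
              (if_neg (by omega)).trans (congrArg X (by omega))])
        z
    else
      scast (show A.Hom (X (t.1 - (s+1))) (X (t.1 - (s+1) + 1)) =
          A.Hom (diagChain X Y s t.1) (diagChain X Y s (t.1 + 1)) by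
        rw [show diagChain X Y s t.1 = X (t.1 - (s+1)) from if_neg (by omega),
            show diagChain X Y s (t.1 + 1) = X (t.1 - (s+1) + 1) from
              (if_neg (by omega)).trans (congrArg X (by omega))])
        (c ⟨t.1 - (s+1), by have := t.2; omega⟩)

/-- The diagonal bimodule of an A∞ category: `n^{r|s} = m^{r+s+1}`. -/
def diagBimod (A : AInfCatData) : BimodData A A where
  space := fun P Q => A.Hom Q P
  n := fun r s X Y c z d =>
    scast (show A.Hom (diagChain X Y s 0) (diagChain X Y s (r + s + 1)) = A.Hom (Y 0) (X r) by
        rw [show diagChain X Y s 0 = Y 0 from if_pos (Nat.zero_le s),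
            show diagChain X Y s (r + s + 1) = X r from
              (if_neg (by omega)).trans (congrArg X (by omega))])
      (A.m (r + s) (diagChain X Y s) (diagTuple A r s X Y c z d))

/-! Submodules and quotients of bimodules. -/

/-- The sub-bimodule determined by a family of submodules preserved by the
structure maps (data level). -/
noncomputable def subBimod {C D : AInfCatData} (M : BimodData C D)
    (Q : ∀ (X : C.Obj) (Y : D.Obj), Submodule F2 (M.space X Y).carrier) :
    BimodData C D where
  space := fun X Y =>
    { carrier := ↥(Q X Y)
      grading := fun d => Submodule.comap (Q X Y).subtype ((M.space X Y).grading d) }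
  n := fun r s X Y c z d => by
    classical exact
      if h : M.n r s X Y c z.1 d ∈ Q (X r) (Y 0) then ⟨M.n r s X Y c z.1 d, h⟩ else 0

/-- The quotient bimodule (data level). -/
noncomputable def quotBimod {C D : AInfCatData} (M : BimodData C D)
    (Q : ∀ (X : C.Obj) (Y : D.Obj), Submodule F2 (M.space X Y).carrier) :
    BimodData C D where
  space := fun X Y =>
    { carrier := (M.space X Y).carrier ⧸ Q X Y
      grading := fun d => Submodule.map (Q X Y).mkQ ((M.space X Y).grading d) }
  n := fun r s X Y c z d =>
    Submodule.Quotient.mk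
      (M.n r s X Y c (Classical.choose ((Submodule.Quotient.mk_surjective (Q (X 0) (Y s))) z)) d)

/-- Corestriction of a pre-morphism into a sub-bimodule (data level). -/
noncomputable def corestPre {C D : AInfCatData} {P' M : BimodData C D} (g : PreMorData P' M)
    (Q : ∀ (X : C.Obj) (Y : D.Obj), Submodule F2 (M.space X Y).carrier) :
    PreMorData P' (subBimod M Q) :=
  ⟨fun r s X Y c z d => by
    classical exact
      if h : g.f r s X Y c z d ∈ Q (X r) (Y 0) then ⟨g.f r s X Y c z d, h⟩ else 0⟩

/-- The connecting morphism `φ = (id - σπ) ∘ n_M ∘ σ : P[-1] → Q` of a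
submodule/quotient pair, for a chosen naive splitting `σ` of the projection. -/
noncomputable def phiMor {C : AInfCatData} (M : BimodData C C)
    (Q : ∀ X Y, Submodule F2 (M.space X Y).carrier)
    (σ0 : ∀ X Y, ((quotBimod M Q).space X Y).carrier → (M.space X Y).carrier) :
    PreMorData (shiftBimod (quotBimod M Q) (-1)) (subBimod M Q) :=
  ⟨(corestPre
      (compPre
        (compPre
          (addPre (idPre M)
            (compPre (naivePre (quotBimod M Q) M σ0)
              (naivePre M (quotBimod M Q) (fun X Y z => Submodule.Quotient.mk z))))
          (toPre M))
        (naivePre (quotBimod M Q) M σ0)) Q).f⟩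

set_option linter.unusedVariables false

section Infra
variable {C D : AInfCatData}

lemma addF2 {V : Type} [AddCommGroup V] [Module F2 V] (a : V) : a + a = 0 := by
  have h : a + a = (2 : F2) • a := by rw [two_smul]
  rw [h, show (2 : F2) = 0 by decide, zero_smul]

lemma eqF2 {V : Type} [AddCommGroup V] [Module F2 V] {a b : V} (h : a + b = 0) : a = b := by
  have : a + (b + b) = a + 0 := by rw [addF2]
  rw [← add_assoc, h, zero_add, add_zero] at this; exact this.symm

lemma selfF2 {V : Type} [AddCommGroup V] [Module F2 V] {a : V} (h : a = a + a) : a = 0 := h.trans (addF2 a)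

lemma cancelF2 {V : Type} [AddCommGroup V] [Module F2 V] (a b c : V) :
    (a + b) + (b + c) = a + c := by
  rw [add_assoc, ← add_assoc b b c, addF2, zero_add]

lemma scast_heq {V W : GradedF2} (h : V = W) (v : V.carrier) : HEq (scast h v) v := by
  subst h; rfl

lemma scast_zero {V W : GradedF2} (h : V = W) : scast h (0 : V.carrier) = 0 := by
  subst h; rfl

lemma scast_add {V W : GradedF2} (h : V = W) (a b : V.carrier) :
    scast h (a + b) = scast h a + scast h b := by subst h; rfl

lemma app_hcongr {α : Sort _} {T : α → Sort _} (c : ∀ a, T a) {x y : α} (h : x = y) :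
    HEq (c x) (c y) := by cases h; rfl

lemma gmap_hcongr {Ob1 Ob2 : Type} {S T : Ob1 → Ob2 → GradedF2}
    (g0 : ∀ A B, (S A B).carrier → (T A B).carrier) {A A' : Ob1} {B B' : Ob2}
    (hA : A = A') (hB : B = B') {u : (S A B).carrier} {u' : (S A' B').carrier}
    (hu : HEq u u') : HEq (g0 A B u) (g0 A' B' u') := by
  cases hA; cases hB; cases hu; rfl

lemma PreMor_hcongr {M N : BimodData C D} (g : PreMorData M N) {r r' s s' : ℕ}
    (hr : r = r') (hs : s = s')
    {X X' : ℕ → C.Obj} (hX : X = X') {Y Y' : ℕ → D.Obj} (hY : Y = Y')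
    {c : ∀ i : Fin r, (C.Hom (X i.1) (X (i.1+1))).carrier}
    {c' : ∀ i : Fin r', (C.Hom (X' i.1) (X' (i.1+1))).carrier} (hc : HEq c c')
    {z : (M.space (X 0) (Y s)).carrier} {z' : (M.space (X' 0) (Y' s')).carrier} (hz : HEq z z')
    {d : ∀ i : Fin s, (D.Hom (Y i.1) (Y (i.1+1))).carrier}
    {d' : ∀ i : Fin s', (D.Hom (Y' i.1) (Y' (i.1+1))).carrier} (hd : HEq d d') :
    HEq (g.f r s X Y c z d) (g.f r' s' X' Y' c' z' d') := by
  subst hr; subst hs; subst hX; subst hY; cases hc; cases hz; cases hd; rfl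

lemma PreMor_ext {M N : BimodData C D} {f g : PreMorData M N}
    (h : ∀ r s X Y c z d, f.f r s X Y c z d = g.f r s X Y c z d) : f = g := by
  cases f; cases g
  congr 1
  funext r s X Y c z d
  exact h r s X Y c z d

lemma grading_congr {V : GradedF2} {i j : ℤ} (h : i = j) {v : V.carrier}
    (hv : v ∈ V.grading i) : v ∈ V.grading j := by subst h; exact hv

lemma naive_ne {M N : BimodData C D}
    {f0 : ∀ X Y, (M.space X Y).carrier → (N.space X Y).carrier}
    {r s : ℕ} {X : ℕ → C.Obj} {Y : ℕ → D.Obj} {c z d} (h : ¬(r = 0 ∧ s = 0)) :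
    (naivePre M N f0).f r s X Y c z d = 0 := dif_neg h

/-- collapse of `compPre g (naive f0)` -/
lemma comp_naive_right {M N P : BimodData C D} (g : PreMorData N P)
    (hg : ∀ r s X Y c d, g.f r s X Y c 0 d = 0)
    (f0 : ∀ X Y, (M.space X Y).carrier → (N.space X Y).carrier)
    (r s : ℕ) (X : ℕ → C.Obj) (Y : ℕ → D.Obj)
    (c : ∀ i : Fin r, (C.Hom (X i.1) (X (i.1+1))).carrier)
    (z : (M.space (X 0) (Y s)).carrier)
    (d : ∀ i : Fin s, (D.Hom (Y i.1) (Y (i.1+1))).carrier) :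
    (compPre g (naivePre M N f0)).f r s X Y c z d = g.f r s X Y c (f0 (X 0) (Y s) z) d := by
  show (∑ i ∈ Finset.range (r+1), ∑ j ∈ Finset.range (s+1), _) = _
  rw [Finset.sum_eq_single_of_mem 0 (Finset.mem_range.2 (by omega))]
  · rw [Finset.sum_eq_single_of_mem 0 (Finset.mem_range.2 (by omega))]
    · rw [dif_pos ⟨Nat.zero_le r, Nat.zero_le s⟩]
      apply eq_of_heq
      refine HEq.trans (scast_heq _ _) ?_
      refine PreMor_hcongr g rfl rfl (funext fun t => congrArg X (Nat.zero_add t)) rfl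
        ?_ ?_ ?_
      · refine Function.hfunext rfl (fun a a' haa => ?_)
        cases eq_of_heq haa
        exact app_hcongr c (Fin.ext (Nat.zero_add _))
      · exact HEq.rfl
      · exact HEq.rfl
    · intro j hj hjne
      have hjs : j ≤ s := by have := Finset.mem_range.1 hj; omega
      rw [dif_pos ⟨Nat.zero_le r, hjs⟩]
      rw [naive_ne (by intro h; exact hjne h.2), hg, scast_zero]
  · intro i hi hine
    apply Finset.sum_eq_zero
    intro j hj
    by_cases h : i ≤ r ∧ j ≤ s
    · rw [dif_pos h]
      rw [naive_ne (by intro hh; exact hine hh.1), hg, scast_zero]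
    · exact dif_neg h

/-- collapse of `compPre (naive g0) f` -/
lemma comp_naive_left {M N P : BimodData C D}
    (g0 : ∀ X Y, (N.space X Y).carrier → (P.space X Y).carrier)
    (f : PreMorData M N)
    (r s : ℕ) (X : ℕ → C.Obj) (Y : ℕ → D.Obj)
    (c : ∀ i : Fin r, (C.Hom (X i.1) (X (i.1+1))).carrier)
    (z : (M.space (X 0) (Y s)).carrier)
    (d : ∀ i : Fin s, (D.Hom (Y i.1) (Y (i.1+1))).carrier) :
    (compPre (naivePre N P g0) f).f r s X Y c z d = g0 (X r) (Y 0) (f.f r s X Y c z d) := by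
  show (∑ i ∈ Finset.range (r+1), ∑ j ∈ Finset.range (s+1), _) = _
  rw [Finset.sum_eq_single_of_mem r (Finset.mem_range.2 (by omega))]
  · rw [Finset.sum_eq_single_of_mem s (Finset.mem_range.2 (by omega))]
    · rw [dif_pos ⟨le_refl r, le_refl s⟩]
      simp only [naivePre]
      rw [dif_pos (⟨by omega, by omega⟩ : r - r = 0 ∧ s - s = 0)]
      apply eq_of_heq
      refine HEq.trans (scast_heq _ _) ?_
      refine HEq.trans (scast_heq _ _) ?_
      refine gmap_hcongr g0 (congrArg X (by omega)) rfl ?_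
      refine HEq.trans (scast_heq _ _) ?_
      refine PreMor_hcongr f rfl rfl rfl ?hY HEq.rfl (scast_heq _ _) ?hd
      case hY => exact funext fun t => congrArg Y (by omega)
      case hd =>
        refine Function.hfunext (by rfl) (fun a a' haa => ?_)
        cases eq_of_heq haa
        exact app_hcongr d (Fin.ext (show s - s + a.1 = a.1 by omega))
    · intro j hj hjne
      have hjs : j ≤ s := by have := Finset.mem_range.1 hj; omega
      rw [dif_pos ⟨le_refl r, hjs⟩]
      rw [naive_ne (by intro h; exact hjne (by omega)), scast_zero]
  · intro i hi hine
    apply Finset.sum_eq_zero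
    intro j hj
    by_cases h : i ≤ r ∧ j ≤ s
    · rw [dif_pos h]
      rw [naive_ne (by intro hh; exact hine (by omega)), scast_zero]
    · exact dif_neg h

end Infra
section NaiveAlg
variable {C D : AInfCatData}

lemma comp_naive_naive {M N P : BimodData C D}
    (g0 : ∀ X Y, (N.space X Y).carrier → (P.space X Y).carrier)
    (f0 : ∀ X Y, (M.space X Y).carrier → (N.space X Y).carrier)
    (hg0 : ∀ X Y, g0 X Y 0 = 0) :
    compPre (naivePre N P g0) (naivePre M N f0)
      = naivePre M P (fun X Y z => g0 X Y (f0 X Y z)) := by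
  apply PreMor_ext; intro r s X Y c z d
  rw [comp_naive_left]
  by_cases h : r = 0 ∧ s = 0
  · obtain ⟨rfl, rfl⟩ := h; rfl
  · rw [naive_ne h, naive_ne h, hg0]

lemma addPre_naive {M N : BimodData C D}
    (a0 b0 : ∀ X Y, (M.space X Y).carrier → (N.space X Y).carrier) :
    addPre (naivePre M N a0) (naivePre M N b0)
      = naivePre M N (fun X Y z => a0 X Y z + b0 X Y z) := by
  apply PreMor_ext; intro r s X Y c z d
  show (naivePre M N a0).f r s X Y c z d + (naivePre M N b0).f r s X Y c z d = _
  by_cases h : r = 0 ∧ s = 0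
  · obtain ⟨rfl, rfl⟩ := h; rfl
  · rw [naive_ne h, naive_ne h, naive_ne h, add_zero]

end NaiveAlg

section Main
variable {C : AInfCatData} {M : BimodData C C}
  {Q : ∀ X Y, Submodule F2 (M.space X Y).carrier}
  {σ0 : ∀ X Y, ((quotBimod M Q).space X Y).carrier → (M.space X Y).carrier}

/-- `Lm m = m + σ (π m)`, the "(id - σπ)" operator. -/
def LmF (M : BimodData C C) (Q : ∀ X Y, Submodule F2 (M.space X Y).carrier)
    (σ0 : ∀ X Y, ((quotBimod M Q).space X Y).carrier → (M.space X Y).carrier)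
    (A B : C.Obj) (m : (M.space A B).carrier) : (M.space A B).carrier :=
  m + σ0 A B (Submodule.Quotient.mk (p := Q A B) m)

lemma n_zero (hM : IsBimod M) (r s : ℕ) (X Y : ℕ → C.Obj)
    (c : ∀ i : Fin r, (C.Hom (X i.1) (X (i.1+1))).carrier)
    (d : ∀ i : Fin s, (C.Hom (Y i.1) (Y (i.1+1))).carrier) :
    M.n r s X Y c 0 d = 0 := by
  have h := hM.add_z r s X Y c 0 0 d
  rw [add_zero] at h
  exact selfF2 h

lemma sigma_zero (hσadd : ∀ A B z z', σ0 A B (z + z') = σ0 A B z + σ0 A B z')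
    (A B : C.Obj) : σ0 A B 0 = 0 :=
  selfF2 (by rw [← hσadd, add_zero])

lemma Lm_add (hσadd : ∀ A B z z', σ0 A B (z + z') = σ0 A B z + σ0 A B z')
    (A B : C.Obj) (a b : (M.space A B).carrier) :
    LmF M Q σ0 A B (a + b) = LmF M Q σ0 A B a + LmF M Q σ0 A B b := by
  unfold LmF
  erw [Submodule.Quotient.mk_add, hσadd]
  abel

lemma Lm_zero (hσadd : ∀ A B z z', σ0 A B (z + z') = σ0 A B z + σ0 A B z')
    (A B : C.Obj) : LmF M Q σ0 A B 0 = 0 := by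
  unfold LmF
  erw [Submodule.Quotient.mk_zero, sigma_zero hσadd, add_zero]

lemma Lm_mem (hsplit : ∀ X Y z, Submodule.Quotient.mk (p := Q X Y) (σ0 X Y z) = z)
    (A B : C.Obj) (m : (M.space A B).carrier) : LmF M Q σ0 A B m ∈ Q A B := by
  rw [← Submodule.Quotient.mk_eq_zero (Q A B)]
  show Submodule.Quotient.mk (m + σ0 A B (Submodule.Quotient.mk (p := Q A B) m)) = 0
  erw [Submodule.Quotient.mk_add, hsplit, addF2]

lemma sigma_mk (A B : C.Obj) (m : (M.space A B).carrier) :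
    σ0 A B (Submodule.Quotient.mk m) = m + LmF M Q σ0 A B m := by
  unfold LmF
  rw [← add_assoc, addF2, zero_add]

lemma quotn_mk (hM : IsBimod M)
    (hQ : ∀ (r s : ℕ) (X Y : ℕ → C.Obj) c z d, z ∈ Q (X 0) (Y s) → M.n r s X Y c z d ∈ Q (X r) (Y 0))
    (r s : ℕ) (X Y : ℕ → C.Obj)
    (c : ∀ i : Fin r, (C.Hom (X i.1) (X (i.1+1))).carrier)
    (w : (M.space (X 0) (Y s)).carrier)
    (d : ∀ i : Fin s, (C.Hom (Y i.1) (Y (i.1+1))).carrier) :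
    (quotBimod M Q).n r s X Y c (Submodule.Quotient.mk w) d
      = Submodule.Quotient.mk (M.n r s X Y c w d) := by
  show Submodule.Quotient.mk (M.n r s X Y c (Classical.choose _) d) = _
  have hspec : Submodule.Quotient.mk (p := Q (X 0) (Y s)) (Classical.choose
      ((Submodule.Quotient.mk_surjective (Q (X 0) (Y s)))
        (Submodule.Quotient.mk (p := Q (X 0) (Y s)) w)))
      = Submodule.Quotient.mk (p := Q (X 0) (Y s)) w :=
    Classical.choose_spec ((Submodule.Quotient.mk_surjective (Q (X 0) (Y s)))
      (Submodule.Quotient.mk (p := Q (X 0) (Y s)) w))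
  have hq : Classical.choose ((Submodule.Quotient.mk_surjective (Q (X 0) (Y s)))
      (Submodule.Quotient.mk (p := Q (X 0) (Y s)) w)) - w ∈ Q (X 0) (Y s) :=
    (Submodule.Quotient.eq _).1 hspec
  rw [show Classical.choose ((Submodule.Quotient.mk_surjective (Q (X 0) (Y s)))
      (Submodule.Quotient.mk (p := Q (X 0) (Y s)) w)) = w + (Classical.choose
      ((Submodule.Quotient.mk_surjective (Q (X 0) (Y s)))
        (Submodule.Quotient.mk (p := Q (X 0) (Y s)) w)) - w) by rw [add_sub_cancel]]
  rw [hM.add_z, Submodule.Quotient.mk_add,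
    (Submodule.Quotient.mk_eq_zero _).2 (hQ r s X Y c _ d hq), add_zero]

lemma subn_eq
    (hQ : ∀ (r s : ℕ) (X Y : ℕ → C.Obj) c z d, z ∈ Q (X 0) (Y s) → M.n r s X Y c z d ∈ Q (X r) (Y 0))
    (r s : ℕ) (X Y : ℕ → C.Obj)
    (c : ∀ i : Fin r, (C.Hom (X i.1) (X (i.1+1))).carrier)
    (w : ((subBimod M Q).space (X 0) (Y s)).carrier)
    (d : ∀ i : Fin s, (C.Hom (Y i.1) (Y (i.1+1))).carrier) :
    (subBimod M Q).n r s X Y c w d = ⟨M.n r s X Y c w.1 d, hQ r s X Y c w.1 d w.2⟩ := by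
  classical
  show dite _ _ _ = _
  exact dif_pos (hQ r s X Y c w.1 d w.2)

lemma scast_sub_val {A A' B B' : C.Obj} (hA : A = A') (hB : B = B')
    (h : (subBimod M Q).space A B = (subBimod M Q).space A' B')
    (h' : M.space A B = M.space A' B')
    (v : ((subBimod M Q).space A B).carrier) :
    (scast h v).1 = scast h' v.1 := by
  subst hA; subst hB; rfl

lemma scast_Pb_mk {A A' B B' : C.Obj} (hA : A = A') (hB : B = B')
    (h : (shiftBimod (quotBimod M Q) (-1)).space A B
        = (shiftBimod (quotBimod M Q) (-1)).space A' B')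
    (h' : M.space A B = M.space A' B') (w : (M.space A B).carrier) :
    scast h (Submodule.Quotient.mk (p := Q A B) w)
      = Submodule.Quotient.mk (p := Q A' B') (scast h' w) := by
  subst hA; subst hB; rfl

lemma scast_Lm {A A' B B' : C.Obj} (hA : A = A') (hB : B = B')
    (h : M.space A B = M.space A' B') (v : (M.space A B).carrier) :
    scast h (LmF M Q σ0 A B v) = LmF M Q σ0 A' B' (scast h v) := by
  subst hA; subst hB; rfl

lemma e_eq (hσadd : ∀ A B z z', σ0 A B (z + z') = σ0 A B z + σ0 A B z') : addPre (idPre M)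
      (compPre (naivePre (quotBimod M Q) M σ0)
        (naivePre M (quotBimod M Q) (fun X Y z => Submodule.Quotient.mk z)))
    = naivePre M M (fun A B m => LmF M Q σ0 A B m) := by
  rw [comp_naive_naive σ0 (fun X Y z => Submodule.Quotient.mk z) (sigma_zero hσadd)]
  exact addPre_naive _ _

lemma H_eq (hσadd : ∀ A B z z', σ0 A B (z + z') = σ0 A B z + σ0 A B z')
    (r s : ℕ) (X Y : ℕ → C.Obj)
    (c : ∀ i : Fin r, (C.Hom (X i.1) (X (i.1+1))).carrier)
    (z : (M.space (X 0) (Y s)).carrier)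
    (d : ∀ i : Fin s, (C.Hom (Y i.1) (Y (i.1+1))).carrier) :
    (compPre (addPre (idPre M)
      (compPre (naivePre (quotBimod M Q) M σ0)
        (naivePre M (quotBimod M Q) (fun X Y z => Submodule.Quotient.mk z))))
      (toPre M)).f r s X Y c z d
    = LmF M Q σ0 (X r) (Y 0) (M.n r s X Y c z d) := by
  rw [e_eq hσadd, comp_naive_left]
  rfl

lemma phi_eq (hM : IsBimod M)
    (hσadd : ∀ A B z z', σ0 A B (z + z') = σ0 A B z + σ0 A B z')
    (hsplit : ∀ X Y z, Submodule.Quotient.mk (p := Q X Y) (σ0 X Y z) = z)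
    (r s : ℕ) (X Y : ℕ → C.Obj)
    (c : ∀ i : Fin r, (C.Hom (X i.1) (X (i.1+1))).carrier)
    (z : ((shiftBimod (quotBimod M Q) (-1)).space (X 0) (Y s)).carrier)
    (d : ∀ i : Fin s, (C.Hom (Y i.1) (Y (i.1+1))).carrier) :
    (phiMor M Q σ0).f r s X Y c z d
      = ⟨LmF M Q σ0 (X r) (Y 0) (M.n r s X Y c (σ0 (X 0) (Y s) z) d),
          Lm_mem hsplit _ _ _⟩ := by
  have hG : (compPre (compPre (addPre (idPre M)
      (compPre (naivePre (quotBimod M Q) M σ0)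
        (naivePre M (quotBimod M Q) (fun X Y z => Submodule.Quotient.mk z))))
      (toPre M)) (naivePre (quotBimod M Q) M σ0)).f r s X Y c z d
      = LmF M Q σ0 (X r) (Y 0) (M.n r s X Y c (σ0 (X 0) (Y s) z) d) := by
    rw [comp_naive_right _ (fun r s X Y c d => by
        rw [H_eq hσadd, n_zero hM, Lm_zero hσadd]) σ0 r s X Y c z d]
    exact H_eq hσadd r s X Y c _ d
  classical
  show dite _ _ _ = _
  rw [hG]; exact dif_pos (Lm_mem hsplit _ _ _)

end Main

lemma mkq_hcongr {C : AInfCatData} {M : BimodData C C}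
    {Q : ∀ X Y, Submodule F2 (M.space X Y).carrier}
    {A A' B B' : C.Obj} (hA : A = A') (hB : B = B')
    {w : (M.space A B).carrier} {w' : (M.space A' B').carrier} (hw : HEq w w') :
    HEq (Submodule.Quotient.mk (p := Q A B) w) (Submodule.Quotient.mk (p := Q A' B') w') := by
  cases hA; cases hB; cases hw; rfl

section Main2
set_option maxHeartbeats 2000000
variable {C : AInfCatData} {M : BimodData C C}
  {Q : ∀ X Y, Submodule F2 (M.space X Y).carrier}
  {σ0 : ∀ X Y, ((quotBimod M Q).space X Y).carrier → (M.space X Y).carrier}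

lemma sigma_mk_scast {A A' B B' : C.Obj} (hA : A = A') (hB : B = B')
    (h' : M.space A B = M.space A' B') (w : (M.space A B).carrier) :
    σ0 A' B' (Submodule.Quotient.mk (p := Q A' B') (scast h' w))
      = scast h' (σ0 A B (Submodule.Quotient.mk (p := Q A B) w)) := by
  subst hA; subst hB; rfl

/-- `Subtype.val` as an additive hom out of the submodule bimodule spaces. -/
noncomputable def valH (A B : C.Obj) :
    ((subBimod M Q).space A B).carrier →+ (M.space A B).carrier :=
  AddMonoidHom.mk' Subtype.val (fun _ _ => rfl)

/-- `Lm` as an additive hom. -/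
def LHom (hσadd : ∀ A B z z', σ0 A B (z + z') = σ0 A B z + σ0 A B z') (A B : C.Obj) :
    (M.space A B).carrier →+ (M.space A B).carrier :=
  AddMonoidHom.mk' (LmF M Q σ0 A B) (Lm_add hσadd A B)


lemma core_alg (hM : IsBimod M)
    (hQ : ∀ (r s : ℕ) (X Y : ℕ → C.Obj) c z d, z ∈ Q (X 0) (Y s) → M.n r s X Y c z d ∈ Q (X r) (Y 0))
    (hσadd : ∀ A B z z', σ0 A B (z + z') = σ0 A B z + σ0 A B z')
    (hsplit : ∀ X Y z, Submodule.Quotient.mk (p := Q X Y) (σ0 X Y z) = z)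
    (K L : ℕ) (X' Y' : ℕ → C.Obj)
    (cc : ∀ i : Fin K, (C.Hom (X' i.1) (X' (i.1+1))).carrier)
    (dd : ∀ i : Fin L, (C.Hom (Y' i.1) (Y' (i.1+1))).carrier)
    {A3 B3 : C.Obj} (hA : X' K = A3) (hB : Y' 0 = B3)
    (ha : (subBimod M Q).space (X' K) (Y' 0) = (subBimod M Q).space A3 B3)
    (hc : M.space (X' K) (Y' 0) = M.space A3 B3)
    (u : (M.space (X' 0) (Y' L)).carrier)
    (pf1 : M.n K L X' Y' cc (LmF M Q σ0 (X' 0) (Y' L) u) dd ∈ Q (X' K) (Y' 0))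
    (pf2 : LmF M Q σ0 (X' K) (Y' 0) (M.n K L X' Y' cc
        (σ0 (X' 0) (Y' L) (Submodule.Quotient.mk u)) dd) ∈ Q (X' K) (Y' 0)) :
    valH A3 B3 (scast ha ⟨M.n K L X' Y' cc (LmF M Q σ0 (X' 0) (Y' L) u) dd, pf1⟩)
      + valH A3 B3 (scast ha ⟨LmF M Q σ0 (X' K) (Y' 0) (M.n K L X' Y' cc
          (σ0 (X' 0) (Y' L) (Submodule.Quotient.mk u)) dd), pf2⟩)
      = LHom hσadd A3 B3 (scast hc (M.n K L X' Y' cc u dd)) := by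
  subst hA; subst hB
  show M.n K L X' Y' cc (LmF M Q σ0 (X' 0) (Y' L) u) dd
      + LmF M Q σ0 (X' K) (Y' 0) (M.n K L X' Y' cc
          (σ0 (X' 0) (Y' L) (Submodule.Quotient.mk u)) dd)
    = LmF M Q σ0 (X' K) (Y' 0) (M.n K L X' Y' cc u dd)
  rw [sigma_mk (σ0 := σ0) (X' 0) (Y' L) u, hM.add_z, Lm_add hσadd]
  have h0 : LmF M Q σ0 (X' K) (Y' 0) (M.n K L X' Y' cc (LmF M Q σ0 (X' 0) (Y' L) u) dd)
      = M.n K L X' Y' cc (LmF M Q σ0 (X' 0) (Y' L) u) dd := by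
    show _ + σ0 _ _ _ = _
    erw [(Submodule.Quotient.mk_eq_zero _).2 (hQ K L X' Y' cc _ dd (Lm_mem hsplit _ _ u)),
      sigma_zero hσadd, add_zero]
  rw [h0, add_comm (LmF M Q σ0 (X' K) (Y' 0) (M.n K L X' Y' cc u dd)), ← add_assoc, addF2,
    zero_add]

lemma core_ins
    (hσadd : ∀ A B z z', σ0 A B (z + z') = σ0 A B z + σ0 A B z')
    (K L : ℕ) (X' Y' : ℕ → C.Obj)
    (cc : ∀ i : Fin K, (C.Hom (X' i.1) (X' (i.1+1))).carrier)
    (dd : ∀ i : Fin L, (C.Hom (Y' i.1) (Y' (i.1+1))).carrier)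
    {A3 B3 : C.Obj} (hA : X' K = A3) (hB : Y' 0 = B3)
    (ha : (subBimod M Q).space (X' K) (Y' 0) = (subBimod M Q).space A3 B3)
    (hc : M.space (X' K) (Y' 0) = M.space A3 B3)
    (u : (M.space (X' 0) (Y' L)).carrier)
    (pf1 : LmF M Q σ0 (X' K) (Y' 0) (M.n K L X' Y' cc u dd) ∈ Q (X' K) (Y' 0)) :
    valH A3 B3 (scast ha ⟨LmF M Q σ0 (X' K) (Y' 0) (M.n K L X' Y' cc u dd), pf1⟩)
      = LHom hσadd A3 B3 (scast hc (M.n K L X' Y' cc u dd)) := by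
  subst hA; subst hB; rfl

lemma delta_phi (hM : IsBimod M)
    (hQ : ∀ (r s : ℕ) (X Y : ℕ → C.Obj) c z d, z ∈ Q (X 0) (Y s) → M.n r s X Y c z d ∈ Q (X r) (Y 0))
    (hσadd : ∀ A B z z', σ0 A B (z + z') = σ0 A B z + σ0 A B z')
    (hsplit : ∀ X Y z, Submodule.Quotient.mk (p := Q X Y) (σ0 X Y z) = z) :
    deltaPre (phiMor M Q σ0) = zeroPre _ _ := by
  apply PreMor_ext; intro r s X Y c z d
  simp only [deltaPre, zeroPre]
  set m := σ0 (X 0) (Y s) z with hm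
  have hzmk : z = Submodule.Quotient.mk (p := Q (X 0) (Y s)) m := (hsplit _ _ z).symm
  have hrel := hM.rel r s X Y c m d
  apply Subtype.val_injective
  show valH (X r) (Y 0) (_ + _ + _ + _) = (0 : (M.space (X r) (Y 0)).carrier)
  rw [map_add, map_add, map_add]
  have step : valH (X r) (Y 0) ((compPre (toPre (subBimod M Q)) (phiMor M Q σ0)).f r s X Y c z d)
      + valH (X r) (Y 0) ((compPre (phiMor M Q σ0) (toPre (shiftBimod (quotBimod M Q) (-1)))).f r s X Y c z d)
      + valH (X r) (Y 0) (∑ a ∈ Finset.range (r + 1), ∑ j ∈ Finset.range (r + 1),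
          if h : a + (j + 1) ≤ r then insC (phiMor M Q σ0) r s X Y c z d a j h else 0)
      + valH (X r) (Y 0) (∑ a ∈ Finset.range (s + 1), ∑ j ∈ Finset.range (s + 1),
          if h : a + (j + 1) ≤ s then insD (phiMor M Q σ0) r s X Y c z d a j h else 0)
      = LHom hσadd (X r) (Y 0) ((compPre (toPre M) (toPre M)).f r s X Y c m d
        + (∑ a ∈ Finset.range (r + 1), ∑ j ∈ Finset.range (r + 1),
            if h : a + (j + 1) ≤ r then insC (toPre M) r s X Y c m d a j h else 0)
        + (∑ a ∈ Finset.range (s + 1), ∑ j ∈ Finset.range (s + 1),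
            if h : a + (j + 1) ≤ s then insD (toPre M) r s X Y c m d a j h else 0)) := by
    rw [map_add, map_add]
    simp only [compPre, map_sum, apply_dite (valH (X r) (Y 0)),
      apply_dite (LHom hσadd (X r) (Y 0)), map_zero, map_sum]
    refine congrArg₂ (· + ·) (congrArg₂ (· + ·) ?ha ?hc) ?hd
    case ha =>
      rw [← Finset.sum_add_distrib]
      refine Finset.sum_congr rfl fun i hi => ?_
      rw [← Finset.sum_add_distrib]
      refine Finset.sum_congr rfl fun j hj => ?_
      by_cases h : i ≤ r ∧ j ≤ s
      · rw [dif_pos h, dif_pos h, dif_pos h]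
        have e1 : X (i + (r - i)) = X r := congrArg X (by omega)
        have e2 : Y s = Y (s - j + j) := congrArg Y (by omega)
        have eM : M.space (X 0) (Y s) = M.space (X 0) (Y (s - j + j)) := by rw [← e2]
        have t1 : (toPre (shiftBimod (quotBimod M Q) (-1))).f = (quotBimod M Q).n := rfl
        have t2 : (toPre (subBimod M Q)).f = (subBimod M Q).n := rfl
        rw [hzmk, scast_Pb_mk rfl e2 _ eM]
        rw [t1, quotn_mk hM hQ]
        erw [phi_eq hM hσadd hsplit, phi_eq hM hσadd hsplit]
        simp only [t2, phi_eq hM hσadd hsplit, subn_eq hQ]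
        erw [subn_eq hQ]
        rw [sigma_mk_scast (σ0 := σ0) rfl e2 eM m, ← hzmk, ← hm]
        exact core_alg hM hQ hσadd hsplit (r - i) (s - j) (fun t => X (i + t)) Y _ _
          (show X (i + (r - i)) = X r from e1) rfl
          (congrArg (fun o => (subBimod M Q).space o (Y 0)) e1)
          (congrArg (fun o => M.space o (Y 0)) e1) _ _ _
      · rw [dif_neg h, dif_neg h, dif_neg h, add_zero]
    case hc =>
      refine Finset.sum_congr rfl fun a ha => Finset.sum_congr rfl fun j hj => ?_
      by_cases h : a + (j + 1) ≤ r
      · rw [dif_pos h, dif_pos h]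
        simp only [insC]
        have ec0 : ctr X a j 0 = X 0 := if_pos (Nat.zero_le a)
        have ecr : ctr X a j (r - (j+1) + 1) = X r := by
          unfold ctr; rw [if_neg (by omega)]; exact congrArg X (by omega)
        have eMc : M.space (X 0) (Y s) = M.space (ctr X a j 0) (Y s) := by rw [ec0]
        rw [hzmk, scast_Pb_mk ec0.symm rfl _ eMc]
        erw [phi_eq hM hσadd hsplit]
        rw [sigma_mk_scast (σ0 := σ0) ec0.symm rfl eMc m, ← hzmk, ← hm]
        exact core_ins hσadd (r - (j+1) + 1) s (ctr X a j) Y _ _ ecr rfl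
          (congrArg (fun o => (subBimod M Q).space o (Y 0)) ecr)
          (congrArg (fun o => M.space o (Y 0)) ecr) _ _
      · rw [dif_neg h, dif_neg h]
    case hd =>
      refine Finset.sum_congr rfl fun a ha => Finset.sum_congr rfl fun j hj => ?_
      by_cases h : a + (j + 1) ≤ s
      · rw [dif_pos h, dif_pos h]
        simp only [insD]
        have ec0 : ctr Y a j 0 = Y 0 := if_pos (Nat.zero_le a)
        have ecs : ctr Y a j (s - (j+1) + 1) = Y s := by
          unfold ctr; rw [if_neg (by omega)]; exact congrArg Y (by omega)
        have eMd : M.space (X 0) (Y s) = M.space (X 0) (ctr Y a j (s - (j+1) + 1)) := by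
          rw [ecs]
        rw [hzmk, scast_Pb_mk rfl ecs.symm _ eMd]
        erw [phi_eq hM hσadd hsplit]
        rw [sigma_mk_scast (σ0 := σ0) rfl ecs.symm eMd m, ← hzmk, ← hm]
        exact core_ins hσadd r (s - (j+1) + 1) X (ctr Y a j) _ _ rfl ec0
          (congrArg (fun o => (subBimod M Q).space (X r) o) ec0)
          (congrArg (fun o => M.space (X r) o) ec0) _ _
      · rw [dif_neg h, dif_neg h]
  rw [step, hrel, map_zero]
end Main2
section Main3
set_option maxHeartbeats 2000000
variable {C : AInfCatData} {M : BimodData C C}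
  {Q : ∀ X Y, Submodule F2 (M.space X Y).carrier}
  {σ0 : ∀ X Y, ((quotBimod M Q).space X Y).carrier → (M.space X Y).carrier}

lemma sigma_deg (hσ : IsPreMor (naivePre (quotBimod M Q) M σ0) 0)
    (A B : C.Obj) (dz : ℤ) (z : ((quotBimod M Q).space A B).carrier)
    (hz : z ∈ ((quotBimod M Q).space A B).grading dz) :
    σ0 A B z ∈ (M.space A B).grading dz := by
  have h := hσ.deg 0 0 (fun _ => A) (fun _ => B) (fun i => i.elim0) dz (fun i => i.elim0)
    (fun i => i.elim0) z (fun i => i.elim0) (fun i => i.elim0) hz (fun i => i.elim0)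
  exact grading_congr (by simp) h

lemma Lm_grading (hσ : IsPreMor (naivePre (quotBimod M Q) M σ0) 0)
    (A B : C.Obj) (k : ℤ) (m : (M.space A B).carrier)
    (hm : m ∈ (M.space A B).grading k) :
    LmF M Q σ0 A B m ∈ (M.space A B).grading k := by
  refine add_mem hm (sigma_deg hσ A B k _ ?_)
  exact Submodule.mem_map_of_mem (f := (Q A B).mkQ) hm

lemma phi_premor (hM : IsBimod M)
    (hQ : ∀ (r s : ℕ) (X Y : ℕ → C.Obj) c z d, z ∈ Q (X 0) (Y s) → M.n r s X Y c z d ∈ Q (X r) (Y 0))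
    (hσ : IsPreMor (naivePre (quotBimod M Q) M σ0) 0)
    (hσadd : ∀ A B z z', σ0 A B (z + z') = σ0 A B z + σ0 A B z')
    (hsplit : ∀ X Y z, Submodule.Quotient.mk (p := Q X Y) (σ0 X Y z) = z) :
    IsPreMor (phiMor M Q σ0) 0 := by
  constructor
  · intro r s X Y c i u v z d
    rw [phi_eq hM hσadd hsplit, phi_eq hM hσadd hsplit, phi_eq hM hσadd hsplit]
    apply Subtype.ext
    show LmF M Q σ0 (X r) (Y 0) _ = LmF M Q σ0 (X r) (Y 0) _ + LmF M Q σ0 (X r) (Y 0) _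
    rw [hM.add_c, Lm_add hσadd]
  · intro r s X Y c z z' d
    rw [phi_eq hM hσadd hsplit, phi_eq hM hσadd hsplit, phi_eq hM hσadd hsplit]
    apply Subtype.ext
    show LmF M Q σ0 (X r) (Y 0) _ = LmF M Q σ0 (X r) (Y 0) _ + LmF M Q σ0 (X r) (Y 0) _
    erw [hσadd, hM.add_z, Lm_add hσadd]
  · intro r s X Y c z d i u v
    rw [phi_eq hM hσadd hsplit, phi_eq hM hσadd hsplit, phi_eq hM hσadd hsplit]
    apply Subtype.ext
    show LmF M Q σ0 (X r) (Y 0) _ = LmF M Q σ0 (X r) (Y 0) _ + LmF M Q σ0 (X r) (Y 0) _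
    rw [hM.add_d, Lm_add hσadd]
  · intro r s X Y dc dz dd c z d h1 h2 h3
    rw [phi_eq hM hσadd hsplit]
    show LmF M Q σ0 (X r) (Y 0) _ ∈ (M.space (X r) (Y 0)).grading _
    have hσz : σ0 (X 0) (Y s) z ∈ (M.space (X 0) (Y s)).grading (dz + -1) :=
      sigma_deg hσ _ _ _ z h2
    have hn := hM.deg r s X Y dc (dz + -1) dd c (σ0 (X 0) (Y s) z) d h1 hσz h3
    exact grading_congr (by ring) (Lm_grading hσ _ _ _ _ hn)

/-- the quasi-isomorphism `M → cone φ` at the naive level. -/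
def psi0 (hsplit : ∀ X Y z, Submodule.Quotient.mk (p := Q X Y) (σ0 X Y z) = z)
    (A B : C.Obj) (w : (M.space A B).carrier) :
    ((coneBimod (phiMor M Q σ0)).space A B).carrier :=
  (Submodule.Quotient.mk w, ⟨LmF M Q σ0 A B w, Lm_mem hsplit A B w⟩)

lemma cone_n_zero (hM : IsBimod M)
    (hQ : ∀ (r s : ℕ) (X Y : ℕ → C.Obj) c z d, z ∈ Q (X 0) (Y s) → M.n r s X Y c z d ∈ Q (X r) (Y 0))
    (hσadd : ∀ A B z z', σ0 A B (z + z') = σ0 A B z + σ0 A B z')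
    (hsplit : ∀ X Y z, Submodule.Quotient.mk (p := Q X Y) (σ0 X Y z) = z)
    (r s : ℕ) (X Y : ℕ → C.Obj)
    (c : ∀ i : Fin r, (C.Hom (X i.1) (X (i.1+1))).carrier)
    (d : ∀ i : Fin s, (C.Hom (Y i.1) (Y (i.1+1))).carrier) :
    (coneBimod (phiMor M Q σ0)).n r s X Y c 0 d = 0 := by
  refine Prod.ext ?_ ?_
  · show (quotBimod M Q).n r s X Y c 0 d = 0
    have h := quotn_mk (Q := Q) hM hQ r s X Y c 0 d
    rw [Submodule.Quotient.mk_zero, n_zero hM, Submodule.Quotient.mk_zero] at h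
    exact h
  · show (subBimod M Q).n r s X Y c 0 d + (phiMor M Q σ0).f r s X Y c 0 d = 0
    rw [subn_eq hQ, phi_eq hM hσadd hsplit]
    apply Subtype.ext
    show M.n r s X Y c (0 : ((subBimod M Q).space (X 0) (Y s)).carrier).1 d
        + LmF M Q σ0 (X r) (Y 0) (M.n r s X Y c (σ0 (X 0) (Y s) 0) d) = 0
    erw [ZeroMemClass.coe_zero, n_zero hM, sigma_zero hσadd, n_zero hM, Lm_zero hσadd, add_zero]

lemma Lm_n_Lm
    (hQ : ∀ (r s : ℕ) (X Y : ℕ → C.Obj) c z d, z ∈ Q (X 0) (Y s) → M.n r s X Y c z d ∈ Q (X r) (Y 0))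
    (hσadd : ∀ A B z z', σ0 A B (z + z') = σ0 A B z + σ0 A B z')
    (hsplit : ∀ X Y z, Submodule.Quotient.mk (p := Q X Y) (σ0 X Y z) = z)
    (K L : ℕ) (X' Y' : ℕ → C.Obj)
    (cc : ∀ i : Fin K, (C.Hom (X' i.1) (X' (i.1+1))).carrier)
    (dd : ∀ i : Fin L, (C.Hom (Y' i.1) (Y' (i.1+1))).carrier)
    (u : (M.space (X' 0) (Y' L)).carrier) :
    LmF M Q σ0 (X' K) (Y' 0) (M.n K L X' Y' cc (LmF M Q σ0 (X' 0) (Y' L) u) dd)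
      = M.n K L X' Y' cc (LmF M Q σ0 (X' 0) (Y' L) u) dd := by
  show _ + σ0 _ _ _ = _
  erw [(Submodule.Quotient.mk_eq_zero _).2 (hQ K L X' Y' cc _ dd (Lm_mem hsplit _ _ u)),
    sigma_zero hσadd, add_zero]

lemma delta_psi (hM : IsBimod M)
    (hQ : ∀ (r s : ℕ) (X Y : ℕ → C.Obj) c z d, z ∈ Q (X 0) (Y s) → M.n r s X Y c z d ∈ Q (X r) (Y 0))
    (hσadd : ∀ A B z z', σ0 A B (z + z') = σ0 A B z + σ0 A B z')
    (hsplit : ∀ X Y z, Submodule.Quotient.mk (p := Q X Y) (σ0 X Y z) = z) :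
    deltaPre (naivePre M (coneBimod (phiMor M Q σ0)) (psi0 hsplit)) = zeroPre _ _ := by
  apply PreMor_ext; intro r s X Y c z d
  simp only [deltaPre, zeroPre]
  have hins1 : (∑ a ∈ Finset.range (r + 1), ∑ j ∈ Finset.range (r + 1),
      if h : a + (j + 1) ≤ r then
        insC (naivePre M (coneBimod (phiMor M Q σ0)) (psi0 hsplit)) r s X Y c z d a j h
      else 0) = 0 := by
    refine Finset.sum_eq_zero fun a ha => Finset.sum_eq_zero fun j hj => ?_
    by_cases h : a + (j + 1) ≤ r
    · rw [dif_pos h]; simp only [insC]; rw [naive_ne (by omega), scast_zero]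
    · exact dif_neg h
  have hins2 : (∑ a ∈ Finset.range (s + 1), ∑ j ∈ Finset.range (s + 1),
      if h : a + (j + 1) ≤ s then
        insD (naivePre M (coneBimod (phiMor M Q σ0)) (psi0 hsplit)) r s X Y c z d a j h
      else 0) = 0 := by
    refine Finset.sum_eq_zero fun a ha => Finset.sum_eq_zero fun j hj => ?_
    by_cases h : a + (j + 1) ≤ s
    · rw [dif_pos h]; simp only [insD]; rw [naive_ne (by omega), scast_zero]
    · exact dif_neg h
  rw [hins1, hins2, add_zero, add_zero]
  rw [comp_naive_right _ (fun r s X Y c d => cone_n_zero hM hQ hσadd hsplit r s X Y c d)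
    (psi0 hsplit) r s X Y c z d]
  rw [comp_naive_left (psi0 hsplit) (toPre M) r s X Y c z d]
  have e1 : (toPre (coneBimod (phiMor M Q σ0))).f r s X Y c (psi0 hsplit (X 0) (Y s) z) d
      = ((quotBimod M Q).n r s X Y c (Submodule.Quotient.mk (p := Q (X 0) (Y s)) z) d,
         (subBimod M Q).n r s X Y c ⟨LmF M Q σ0 (X 0) (Y s) z, Lm_mem hsplit _ _ z⟩ d
           + (phiMor M Q σ0).f r s X Y c (Submodule.Quotient.mk (p := Q (X 0) (Y s)) z) d) := rfl
  have e2 : psi0 hsplit (X r) (Y 0) ((toPre M).f r s X Y c z d)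
      = (Submodule.Quotient.mk (p := Q (X r) (Y 0)) (M.n r s X Y c z d),
         ⟨LmF M Q σ0 (X r) (Y 0) (M.n r s X Y c z d), Lm_mem hsplit _ _ _⟩) := rfl
  rw [e1, e2]
  refine Prod.ext ?_ ?_
  · rw [quotn_mk hM hQ]
    show (Submodule.Quotient.mk (p := Q (X r) (Y 0)) (M.n r s X Y c z d) :
        (M.space (X r) (Y 0)).carrier ⧸ Q (X r) (Y 0))
      + Submodule.Quotient.mk (p := Q (X r) (Y 0)) (M.n r s X Y c z d) = 0
    exact addF2 _
  · erw [subn_eq hQ, phi_eq hM hσadd hsplit, sigma_mk (σ0 := σ0)]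
    apply Subtype.ext
    show M.n r s X Y c (LmF M Q σ0 (X 0) (Y s) z) d
        + LmF M Q σ0 (X r) (Y 0) (M.n r s X Y c (z + LmF M Q σ0 (X 0) (Y s) z) d)
        + LmF M Q σ0 (X r) (Y 0) (M.n r s X Y c z d) = 0
    rw [hM.add_z, Lm_add hσadd, Lm_n_Lm hQ hσadd hsplit]
    have key : ∀ (a b : (M.space (X r) (Y 0)).carrier), a + (b + a) + b = 0 := fun a b => by
      rw [add_comm b a, ← add_assoc, addF2, zero_add, addF2]
    exact key _ _

lemma psi_premor (hM : IsBimod M)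
    (hσ : IsPreMor (naivePre (quotBimod M Q) M σ0) 0)
    (hσadd : ∀ A B z z', σ0 A B (z + z') = σ0 A B z + σ0 A B z')
    (hsplit : ∀ X Y z, Submodule.Quotient.mk (p := Q X Y) (σ0 X Y z) = z) :
    IsPreMor (naivePre M (coneBimod (phiMor M Q σ0)) (psi0 hsplit)) 0 := by
  constructor
  · intro r s X Y c i u v z d
    have hr : ¬(r = 0 ∧ s = 0) := fun hh => Fin.elim0 (hh.1 ▸ i)
    rw [naive_ne hr, naive_ne hr, naive_ne hr, add_zero]
  · intro r s X Y c z z' d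
    by_cases h : r = 0 ∧ s = 0
    · obtain ⟨rfl, rfl⟩ := h
      show psi0 hsplit (X 0) (Y 0) (z + z') = psi0 hsplit (X 0) (Y 0) z + psi0 hsplit (X 0) (Y 0) z'
      refine Prod.ext ?_ ?_
      · exact Submodule.Quotient.mk_add _
      · exact Subtype.ext (Lm_add hσadd _ _ _ _)
    · rw [naive_ne h, naive_ne h, naive_ne h, add_zero]
  · intro r s X Y c z d i u v
    have hs : ¬(r = 0 ∧ s = 0) := fun hh => Fin.elim0 (hh.2 ▸ i)
    rw [naive_ne hs, naive_ne hs, naive_ne hs, add_zero]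
  · intro r s X Y dc dz dd c z d h1 h2 h3
    by_cases h : r = 0 ∧ s = 0
    · obtain ⟨rfl, rfl⟩ := h
      show psi0 hsplit (X 0) (Y 0) z ∈
        (((coneBimod (phiMor M Q σ0)).space (X 0) (Y 0)).grading _)
      refine Submodule.mem_prod.2 ⟨?_, ?_⟩
      · show Submodule.Quotient.mk (p := Q (X 0) (Y 0)) z
            ∈ ((quotBimod M Q).space (X 0) (Y 0)).grading
              (((∑ i : Fin 0, dc i) + dz + (∑ i : Fin 0, dd i) + (0 - 0 - 0)) + 1 + -1)
        exact grading_congr (i := dz) (by simp) (Submodule.mem_map_of_mem (f := (Q (X 0) (Y 0)).mkQ) h2)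
      · show LmF M Q σ0 (X 0) (Y 0) z ∈ (M.space (X 0) (Y 0)).grading _
        refine grading_congr (i := dz) ?_ (Lm_grading hσ _ _ dz z h2)
        simp
    · rw [naive_ne h]
      exact zero_mem _
end Main3
section Main4
set_option maxHeartbeats 2000000
variable {C : AInfCatData} {M : BimodData C C}
  {Q : ∀ X Y, Submodule F2 (M.space X Y).carrier}
  {σ0 : ∀ X Y, ((quotBimod M Q).space X Y).carrier → (M.space X Y).carrier}

lemma psi_qiso (hM : IsBimod M)
    (hQ : ∀ (r s : ℕ) (X Y : ℕ → C.Obj) c z d, z ∈ Q (X 0) (Y s) → M.n r s X Y c z d ∈ Q (X r) (Y 0))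
    (hσadd : ∀ A B z z', σ0 A B (z + z') = σ0 A B z + σ0 A B z')
    (hsplit : ∀ X Y z, Submodule.Quotient.mk (p := Q X Y) (σ0 X Y z) = z) :
    QIso (naivePre M (coneBimod (phiMor M Q σ0)) (psi0 hsplit)) := by
  intro A B
  let θ : ((coneBimod (phiMor M Q σ0)).space A B).carrier → (M.space A B).carrier :=
    fun w => σ0 A B w.1 + w.2.1
  have hθψ : ∀ mm, θ (psi0 hsplit A B mm) = mm := fun mm => by
    show σ0 A B (Submodule.Quotient.mk (p := Q A B) mm) + LmF M Q σ0 A B mm = mm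
    rw [sigma_mk (σ0 := σ0), add_assoc, addF2, add_zero]
  have hψθ : ∀ w, psi0 hsplit A B (θ w) = w := fun w => by
    have hmkw : Submodule.Quotient.mk (p := Q A B) (σ0 A B w.1 + w.2.1) = w.1 := by
      erw [Submodule.Quotient.mk_add, hsplit, (Submodule.Quotient.mk_eq_zero _).2 w.2.2,
        add_zero]
    refine Prod.ext ?_ ?_
    · exact hmkw
    · apply Subtype.ext
      show (σ0 A B w.1 + w.2.1)
          + σ0 A B (Submodule.Quotient.mk (p := Q A B) (σ0 A B w.1 + w.2.1)) = w.2.1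
      rw [hmkw, add_comm (σ0 A B w.1) w.2.1, add_assoc, addF2, add_zero]
  have hcomm : ∀ mm, bdiff (coneBimod (phiMor M Q σ0)) A B (psi0 hsplit A B mm)
      = psi0 hsplit A B (bdiff M A B mm) := by
    intro mm
    have h := congrArg (fun F : PreMorData M (coneBimod (phiMor M Q σ0)) =>
        F.f 0 0 (fun _ => A) (fun _ => B) (fun i => i.elim0) mm (fun i => i.elim0))
      (delta_psi hM hQ hσadd hsplit)
    simp only [deltaPre, zeroPre] at h
    rw [comp_naive_right _ (fun r s X Y c d => cone_n_zero hM hQ hσadd hsplit r s X Y c d)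
        (psi0 hsplit) 0 0 (fun _ => A) (fun _ => B) (fun i => i.elim0) mm (fun i => i.elim0),
      comp_naive_left (psi0 hsplit) (toPre M) 0 0 (fun _ => A) (fun _ => B)
        (fun i => i.elim0) mm (fun i => i.elim0)] at h
    simp only [Finset.sum_range_succ, Finset.sum_range_zero, zero_add] at h
    rw [dif_neg (by omega : ¬(0 + (0 + 1) ≤ 0)), dif_neg (by omega : ¬(0 + (0 + 1) ≤ 0)),
      add_zero, add_zero] at h
    exact eqF2 h
  have hθcomm : ∀ w, bdiff M A B (θ w) = θ (bdiff (coneBimod (phiMor M Q σ0)) A B w) := by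
    intro w
    have h2 := congrArg θ (hcomm (θ w))
    rw [hψθ w] at h2
    rw [hθψ] at h2
    exact h2.symm
  constructor
  · intro zz hz hex
    obtain ⟨u, hu⟩ := hex
    refine ⟨θ u, ?_⟩
    have h3 := congrArg θ hu
    rw [show θ (comp00 (naivePre M (coneBimod (phiMor M Q σ0)) (psi0 hsplit)) A B zz)
        = zz from hθψ zz] at h3
    rw [hθcomm u]
    exact h3
  · intro z' hz'
    refine ⟨θ z', ?_, 0, ?_⟩
    · rw [hθcomm z', hz']
      show σ0 A B 0 + (0 : (M.space A B).carrier) = 0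
      rw [sigma_zero hσadd, add_zero]
    · show comp00 (naivePre M (coneBimod (phiMor M Q σ0)) (psi0 hsplit)) A B (θ z') + z'
        = bdiff (coneBimod (phiMor M Q σ0)) A B 0
      rw [show comp00 (naivePre M (coneBimod (phiMor M Q σ0)) (psi0 hsplit)) A B (θ z')
          = psi0 hsplit A B (θ z') from rfl, hψθ z', addF2]
      exact (cone_n_zero hM hQ hσadd hsplit 0 0 (fun _ => A) (fun _ => B)
        (fun i => i.elim0) (fun i => i.elim0)).symm

end Main4
/-- `φ = (id - σπ) ∘ n_M ∘ σ : P[-1] → Q` is a bimodule morphism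
and `M` is quasi-isomorphic to `cone(φ)`. -/
theorem stmt_5 {C : AInfCatData} (hC : IsAInfCat C)
    {M : BimodData C C} (hM : IsBimod M)
    (Q : ∀ X Y, Submodule F2 (M.space X Y).carrier)
    (hQ : ∀ (r s : ℕ) (X Y : ℕ → C.Obj)
      (c : ∀ i : Fin r, (C.Hom (X i.1) (X (i.1 + 1))).carrier)
      (z : (M.space (X 0) (Y s)).carrier)
      (d : ∀ i : Fin s, (C.Hom (Y i.1) (Y (i.1 + 1))).carrier),
      z ∈ Q (X 0) (Y s) → M.n r s X Y c z d ∈ Q (X r) (Y 0))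
    (σ0 : ∀ X Y, ((quotBimod M Q).space X Y).carrier → (M.space X Y).carrier)
    (hσ : IsPreMor (naivePre (quotBimod M Q) M σ0) 0)
    (hsplit : ∀ X Y z, Submodule.Quotient.mk (p := Q X Y) (σ0 X Y z) = z) :
    IsMorphism (phiMor M Q σ0) 0 ∧
    ∃ ψ : PreMorData M (coneBimod (phiMor M Q σ0)), IsMorphism ψ 0 ∧ QIso ψ := by
  have hσadd : ∀ A B (z z' : ((quotBimod M Q).space A B).carrier),
      σ0 A B (z + z') = σ0 A B z + σ0 A B z' := fun A B z z' =>
    hσ.add_z 0 0 (fun _ => A) (fun _ => B) (fun i => i.elim0) z z' (fun i => i.elim0)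
  exact ⟨⟨phi_premor hM hQ hσ hσadd hsplit, delta_phi hM hQ hσadd hsplit⟩,
    naivePre M (coneBimod (phiMor M Q σ0)) (psi0 hsplit),
    ⟨psi_premor hM hσ hσadd hsplit, delta_psi hM hQ hσadd hsplit⟩,
    psi_qiso hM hQ hσadd hsplit⟩
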